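/- The two-color graph Ramsey number R(B_3, B_6) is at least 17; that is, there exists a simple graph G on 16 vertices such that the complement of G contains no copy of the book B_3 as a subgraph and G contains no copy of the book B_6 as a subgraph. -/

import Mathlib

open SimpleGraph

/-- `ContainsCopy G H` means the graph `H` contains a copy of `G` as a
(not necessarily induced) subgraph. -/
def ContainsCopy {α β : Type*} (G : SimpleGraph α) (H : SimpleGraph β) : Prop :=
  ∃ f : α → β, Function.Injective f ∧ ∀ ⦃u v : α⦄, G.Adj u v → H.Adj (f u) (f v)

/-- The join `G + H` of two graphs: take disjoint copies of `G` and `H` and add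
all edges between them. -/
def graphJoin {α β : Type*} (G : SimpleGraph α) (H : SimpleGraph β) :
    SimpleGraph (α ⊕ β) where
  Adj u v :=
    match u, v with
    | .inl a, .inl b => G.Adj a b
    | .inr a, .inr b => H.Adj a b
    | .inl _, .inr _ => True
    | .inr _, .inl _ => True
  symm := by
    constructor
    intro u v h
    cases u <;> cases v <;> simp_all <;> exact h.symm
  loopless := by
    constructor
    intro u
    cases u <;> simp

/-- The wheel `W n`: the join of a single vertex with a cycle on `n - 1` vertices. -/
def wheelGraph (n : ℕ) : SimpleGraph (Fin 1 ⊕ Fin (n - 1)) :=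
  graphJoin (⊥ : SimpleGraph (Fin 1)) (cycleGraph (n - 1))

/-- The book `B n`: the join of an edge `K₂` with an empty graph on `n` vertices. -/
def bookGraph (n : ℕ) : SimpleGraph (Fin 2 ⊕ Fin n) :=
  graphJoin (⊤ : SimpleGraph (Fin 2)) (⊥ : SimpleGraph (Fin n))

/-- The two-colour graph Ramsey number `R(G₁, G₂)`: the least `n` such that every
simple graph `G` on `n` vertices contains a copy of `G₁`, or its complement
contains a copy of `G₂`. -/
noncomputable def ramseyNumber {α β : Type*} (G₁ : SimpleGraph α) (G₂ : SimpleGraph β) : ℕ :=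
  sInf {n : ℕ | ∀ G : SimpleGraph (Fin n), ContainsCopy G₁ G ∨ ContainsCopy G₂ Gᶜ}

open Finset in
/-- Finite Ramsey theorem, in "clique or independent set inside a large finset" form. -/
theorem aux_ramsey : ∀ s t : ℕ, ∃ N : ℕ, ∀ (V : Type) [DecidableEq V]
    (G : SimpleGraph V) [DecidableRel G.Adj] (A : Finset V), N ≤ A.card →
    (∃ B ⊆ A, B.card = s ∧ G.IsClique ↑B) ∨ (∃ B ⊆ A, B.card = t ∧ Gᶜ.IsClique ↑B) := by
  intro s
  induction s with
  | zero =>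
    intro t
    exact ⟨0, fun V _ G _ A _ => Or.inl ⟨∅, empty_subset _, card_empty, by simp⟩⟩
  | succ s ih =>
    intro t
    induction t with
    | zero =>
      exact ⟨0, fun V _ G _ A _ => Or.inr ⟨∅, empty_subset _, card_empty, by simp⟩⟩
    | succ t iht =>
      obtain ⟨N1, h1⟩ := ih (t + 1)
      obtain ⟨N2, h2⟩ := iht
      refine ⟨N1 + N2 + 1, fun V _ G _ A hA => ?_⟩
      have hne : A.Nonempty := card_pos.mp (by omega)
      obtain ⟨v, hv⟩ := hne
      set A' := A.erase v with hA'
      have hcard : N1 + N2 ≤ A'.card := by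
        rw [hA', card_erase_of_mem hv]; omega
      set Nb := A'.filter (fun w => G.Adj v w) with hNb
      set Cb := A'.filter (fun w => ¬ G.Adj v w) with hCb
      have hsplit : Nb.card + Cb.card = A'.card := by
        rw [hNb, hCb]; exact card_filter_add_card_filter_not _
      rcases le_or_gt N1 Nb.card with hle | hlt
      · rcases h1 V G Nb hle with ⟨B, hBsub, hBcard, hBcl⟩ | ⟨B, hBsub, hBcard, hBcl⟩
        · refine Or.inl ⟨insert v B, ?_, ?_, ?_⟩
          · refine insert_subset hv (hBsub.trans ?_)
            exact (filter_subset _ _).trans (erase_subset _ _)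
          · have hvB : v ∉ B := fun h => (mem_erase.mp ((filter_subset _ _) (hBsub h))).1 rfl
            rw [card_insert_of_notMem hvB, hBcard]
          · rw [coe_insert]
            refine hBcl.insert fun b hb _ => ?_
            exact (mem_filter.mp (hBsub hb)).2
        · exact Or.inr ⟨B, hBsub.trans ((filter_subset _ _).trans (erase_subset _ _)), hBcard, hBcl⟩
      · have hle2 : N2 ≤ Cb.card := by omega
        rcases h2 V G Cb hle2 with ⟨B, hBsub, hBcard, hBcl⟩ | ⟨B, hBsub, hBcard, hBcl⟩
        · exact Or.inl ⟨B, hBsub.trans ((filter_subset _ _).trans (erase_subset _ _)), hBcard, hBcl⟩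
        · refine Or.inr ⟨insert v B, ?_, ?_, ?_⟩
          · refine insert_subset hv (hBsub.trans ?_)
            exact (filter_subset _ _).trans (erase_subset _ _)
          · have hvB : v ∉ B := fun h => (mem_erase.mp ((filter_subset _ _) (hBsub h))).1 rfl
            rw [card_insert_of_notMem hvB, hBcard]
          · rw [coe_insert]
            refine hBcl.insert fun b hb hne => ?_
            have := (mem_filter.mp (hBsub hb)).2
            exact ⟨hne, fun h => this h⟩

open Finset in
/-- A clique on `2 + n` vertices contains a copy of the book `B n`. -/
theorem aux_clique_containsBook {n : ℕ} {β : Type*} [DecidableEq β] (G : SimpleGraph β)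
    (B : Finset β) (hc : B.card = 2 + n) (hcl : G.IsClique ↑B) :
    ContainsCopy (bookGraph n) G := by
  have e : Fin (2 + n) ≃ {x // x ∈ B} := (B.equivFinOfCardEq hc).symm
  refine ⟨fun u => (e (finSumFinEquiv u)).1, ?_, ?_⟩
  · intro u v h
    exact finSumFinEquiv.injective (e.injective (Subtype.ext h))
  · intro u v huv
    have hne : u ≠ v := huv.ne
    refine hcl (e (finSumFinEquiv u)).2 (e (finSumFinEquiv v)).2 ?_
    intro h
    exact hne (finSumFinEquiv.injective (e.injective (Subtype.ext h)))

open Finset in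
/-- A copy of the book `B n` yields an edge with `n` common neighbours. -/
theorem aux_book_common_nbrs {n : ℕ} {β : Type*} [Fintype β] [DecidableEq β]
    (H : SimpleGraph β) [DecidableRel H.Adj] (h : ContainsCopy (bookGraph n) H) :
    ∃ u v : β, H.Adj u v ∧ n ≤ (univ.filter fun w => H.Adj u w ∧ H.Adj v w).card := by
  obtain ⟨f, hinj, hadj⟩ := h
  refine ⟨f (.inl 0), f (.inl 1), hadj (show (0:Fin 2) ≠ 1 by decide), ?_⟩
  have hsub : (univ.image fun k : Fin n => f (.inr k)) ⊆
      (univ.filter fun w => H.Adj (f (.inl 0)) w ∧ H.Adj (f (.inl 1)) w) := by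
    intro w hw
    obtain ⟨k, _, rfl⟩ := mem_image.mp hw
    exact mem_filter.mpr ⟨mem_univ _, hadj trivial, hadj trivial⟩
  calc n = (univ.image fun k : Fin n => f (.inr k)).card := by
            rw [card_image_of_injective _ (fun a b h => Sum.inr_injective (hinj h)), card_univ,
              Fintype.card_fin]
    _ ≤ _ := card_le_card hsub

/-- The complement of the 4×4 rook's graph, on 16 vertices. -/
def auxG : SimpleGraph (Fin 16) where
  Adj i j := i.val / 4 ≠ j.val / 4 ∧ i.val % 4 ≠ j.val % 4
  symm := ⟨fun _ _ h => ⟨h.1.symm, h.2.symm⟩⟩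
  loopless := ⟨fun _ h => h.1 rfl⟩

instance : DecidableRel auxG.Adj := fun i j =>
  inferInstanceAs (Decidable (i.val / 4 ≠ j.val / 4 ∧ i.val % 4 ≠ j.val % 4))

open Finset in
theorem auxG_no6 : ∀ u v : Fin 16, auxG.Adj u v →
    (univ.filter fun w => auxG.Adj u w ∧ auxG.Adj v w).card ≤ 5 := by decide

open Finset in
theorem auxG_no3 : ∀ u v : Fin 16, auxGᶜ.Adj u v →
    (univ.filter fun w => auxGᶜ.Adj u w ∧ auxGᶜ.Adj v w).card ≤ 2 := by decide

theorem auxG_noB6 : ¬ ContainsCopy (bookGraph 6) auxG := by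
  intro h
  obtain ⟨u, v, huv, hcard⟩ := aux_book_common_nbrs auxG h
  have := auxG_no6 u v huv
  omega

theorem auxG_noB3 : ¬ ContainsCopy (bookGraph 3) auxGᶜ := by
  intro h
  obtain ⟨u, v, huv, hcard⟩ := aux_book_common_nbrs auxGᶜ h
  have := auxG_no3 u v huv
  omega

/-- **R(B₃, B₆) ≥ 17**. -/
theorem ramsey_B3_B6_ge_17 :
    17 ≤ ramseyNumber (bookGraph 3) (bookGraph 6) ∧
    ∃ G : SimpleGraph (Fin 16),
      ¬ ContainsCopy (bookGraph 3) Gᶜ ∧ ¬ ContainsCopy (bookGraph 6) G := by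
  constructor
  · -- the infimum is over a nonempty set, and every element is ≥ 17
    obtain ⟨N, hN⟩ := aux_ramsey 5 8
    refine le_csInf ⟨N, ?_⟩ ?_
    · -- N is in the set (Ramsey's theorem)
      intro G
      classical
      rcases hN (Fin N) G Finset.univ (by simp) with ⟨B, _, hBcard, hBcl⟩ | ⟨B, _, hBcard, hBcl⟩
      · exact Or.inl (aux_clique_containsBook G B (by omega) hBcl)
      · exact Or.inr (aux_clique_containsBook Gᶜ B (by omega) hBcl)
    · -- every element of the set is ≥ 17
      intro n hn
      by_contra hlt
      push_neg at hlt
      have hle : n ≤ 16 := by omega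
      set ι : Fin n → Fin 16 := Fin.castLE hle with hι
      have hιinj : Function.Injective ι := Fin.castLE_injective hle
      rcases hn (SimpleGraph.comap ι auxGᶜ) with ⟨f, hf, hadj⟩ | ⟨f, hf, hadj⟩
      · exact auxG_noB3 ⟨ι ∘ f, hιinj.comp hf, fun u v h => hadj h⟩
      · refine auxG_noB6 ⟨ι ∘ f, hιinj.comp hf, fun u v h => ?_⟩
        obtain ⟨hne, hnadj⟩ := (SimpleGraph.compl_adj _ _ _).mp (hadj h)
        by_contra hnG
        exact hnadj ((SimpleGraph.compl_adj _ _ _).mpr ⟨hιinj.ne hne, hnG⟩)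
  · exact ⟨auxG, auxG_noB3, auxG_noB6⟩
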